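/- arXiv:0710.0794 — 5 statements merged into one kernel-verified Lean document; each statement's English description precedes it below -/
import Mathlib

section
/- Let c > 0 and let v : ℝ → ℝ be a function in H¹_loc(ℝ) such that y ↦ e^{cy/2} v(y) and y ↦ e^{cy/2} v'(y) both belong to L²(ℝ). Then for every y₁ ∈ ℝ one has the weighted Poincaré inequality (c²/4) ∫_{y₁}^∞ e^{cy} |v(y)|² dy ≤ ∫_{y₁}^∞ e^{cy} |v'(y)|² dy. -/
/-!
With `F = e^{cy} v²` one has `F' = c F + 2 e^{cy} v v'`. Since `F` and `F'` are integrable,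
`F → 0` at `+∞`, so `∫_{y₁}^∞ (c F + 2 e^{cy} v v') = -F(y₁) ≤ 0`. Integrating
`0 ≤ e^{cy} (c v / 2 + v')²` then gives `c ∫ e^{cy} v v' ≥ -(c²/4) ∫ F - ∫ e^{cy} v'²`,
and combining the two inequalities yields `(c²/4) ∫ F ≤ ∫ e^{cy} v'²`.
-/

open MeasureTheory Set Filter Topology

theorem abs_mul_mul_le_half_mul_sq_add_sq {w : ℝ} (hw : 0 ≤ w) (a b : ℝ) :
    |w * a * b| ≤ (w * a ^ 2 + w * b ^ 2) / 2 := by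
  rw [mul_assoc, abs_mul, abs_of_nonneg hw]
  have : |a * b| ≤ (a ^ 2 + b ^ 2) / 2 := by
    rw [abs_mul]
    nlinarith [sq_nonneg (|a| - |b|), sq_abs a, sq_abs b]
  nlinarith

theorem integrable_mul_mul_of_integrable_mul_sq {α : Type*} [MeasurableSpace α] {μ : Measure α}
    {w f g : α → ℝ} (hw : ∀ x, 0 ≤ w x)
    (hmeas : AEStronglyMeasurable (fun x => w x * f x * g x) μ)
    (hf : Integrable (fun x => w x * f x ^ 2) μ) (hg : Integrable (fun x => w x * g x ^ 2) μ) :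
    Integrable (fun x => w x * f x * g x) μ :=
  ((hf.add hg).div_const 2).mono' hmeas <| .of_forall fun x =>
    abs_mul_mul_le_half_mul_sq_add_sq (hw x) (f x) (g x)

/-- The boundary term at `+∞` vanishes because `f` itself is integrable. -/
theorem integral_Ioi_of_hasDerivAt_of_integrableOn {f f' : ℝ → ℝ} {a : ℝ}
    (hderiv : ∀ x ∈ Ici a, HasDerivAt f (f' x) x)
    (hf : IntegrableOn f (Ioi a)) (hf' : IntegrableOn f' (Ioi a)) :
    ∫ x in Ioi a, f' x = -f a := by
  have hlim : Tendsto f atTop (𝓝 0) :=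
    tendsto_zero_of_hasDerivAt_of_integrableOn_Ioi (fun x hx => hderiv x (mem_Ici_of_Ioi hx))
      hf' hf
  rw [integral_Ioi_of_hasDerivAt_of_tendsto' hderiv hf' hlim, zero_sub]

theorem hasDerivAt_exp_mul_sq {v : ℝ → ℝ} {v' c y : ℝ} (hv : HasDerivAt v v' y) :
    HasDerivAt (fun y => Real.exp (c * y) * v y ^ 2)
      (c * (Real.exp (c * y) * v y ^ 2) + 2 * (Real.exp (c * y) * v y * v')) y := by
  have hexp : HasDerivAt (fun y => Real.exp (c * y)) (Real.exp (c * y) * c) y := by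
    simpa using ((hasDerivAt_id y).const_mul c).exp
  refine (hexp.fun_mul (hv.fun_pow 2)).congr_deriv ?_
  norm_num
  ring

theorem neg_mul_mul_mul_le_of_nonneg {w : ℝ} (hw : 0 ≤ w) (c a b : ℝ) :
    -(c * (w * a * b)) ≤ c ^ 2 / 4 * (w * a ^ 2) + w * b ^ 2 := by
  have : 0 ≤ w * (c / 2 * a + b) ^ 2 := by positivity
  nlinarith

/-- Weighted Poincaré inequality in the space `H¹_c(ℝ)`:
if `e^{cy/2} v` and `e^{cy/2} v'` are square integrable, then
`(c²/4) ∫_{y₁}^∞ e^{cy} v² ≤ ∫_{y₁}^∞ e^{cy} v'²`. -/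
theorem weighted_poincare
    (c : ℝ) (hc : 0 < c) (v v' : ℝ → ℝ)
    (hderiv : ∀ y, HasDerivAt v (v' y) y)
    (hv : Integrable (fun y => Real.exp (c * y) * (v y) ^ 2))
    (hv' : Integrable (fun y => Real.exp (c * y) * (v' y) ^ 2))
    (y₁ : ℝ) :
    c ^ 2 / 4 * ∫ y in Set.Ioi y₁, Real.exp (c * y) * (v y) ^ 2
      ≤ ∫ y in Set.Ioi y₁, Real.exp (c * y) * (v' y) ^ 2 := by
  set G : ℝ → ℝ := fun y => Real.exp (c * y) * v y * v' y
  have hv'_meas : Measurable v' := by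
    simpa only [funext fun y => (hderiv y).deriv] using measurable_deriv v
  have hv_cont : Continuous v := continuous_iff_continuousAt.2 fun y => (hderiv y).continuousAt
  have hG : Integrable G := integrable_mul_mul_of_integrable_mul_sq (fun y => (Real.exp_pos _).le)
    ((by fun_prop : Continuous fun y => Real.exp (c * y) * v y).measurable.mul
      hv'_meas).aestronglyMeasurable hv hv'
  have hboundary :
      c * (∫ y in Ioi y₁, Real.exp (c * y) * v y ^ 2) + 2 * ∫ y in Ioi y₁, G y ≤ 0 := by
    rw [← integral_const_mul, ← integral_const_mul,
      ← integral_add (hv.const_mul c).integrableOn (hG.const_mul 2).integrableOn,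
      integral_Ioi_of_hasDerivAt_of_integrableOn
      (fun y _ => hasDerivAt_exp_mul_sq (hderiv y)) hv.integrableOn
      ((hv.const_mul c).add (hG.const_mul 2)).integrableOn, neg_nonpos]
    positivity
  have hsquare : -(c * ∫ y in Ioi y₁, G y) ≤
      c ^ 2 / 4 * (∫ y in Ioi y₁, Real.exp (c * y) * v y ^ 2) +
        ∫ y in Ioi y₁, Real.exp (c * y) * v' y ^ 2 := by
    rw [← integral_const_mul, ← integral_const_mul, ← integral_neg, ← integral_add
      (hv.const_mul _).integrableOn hv'.integrableOn]
    exact integral_mono (hG.const_mul c).neg.integrableOn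
      ((hv.const_mul _).add hv').integrableOn fun y =>
        neg_mul_mul_mul_le_of_nonneg (Real.exp_pos _).le c (v y) (v' y)
  linarith [mul_le_mul_of_nonneg_left hboundary hc.le]
end

section
/- Let α > 0, c > 0, m > 0, and set μ_α = (1/(2α))(−1 + Re √(1 − 4αm)) (the principal square root, so μ_α = (−1 + √(1−4αm))/(2α) if 4αm ≤ 1 and μ_α = −1/(2α) otherwise), which is negative. Suppose z ∈ ℂ satisfies Re(z) > μ_α, and define γ = (c/2)(1 + 2αz) and δ = m + z(1 + αz). Then Re √(γ² + δ) > Re(γ) > 0, where √ denotes the principal branch of the complex square root. -/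
/-!
Write `√w = p + iq` with `p ≥ 0`. If `p ≤ a` then `w.re = p² - q²` and `w.im = 2pq` force
`(w.im)² ≤ 4a²(a² - w.re)`, so the reverse strict inequality places `√w` to the right of the line
`Re = a`. For `w = γ² + δ` and `a = Re γ` that inequality becomes
`(1 + 2αx)² (c²(m + x + αx²) + (c²α + 1) y²) > 0` with `z = x + iy`, and `Re z > μ_α` says exactly
that `1 + 2αx > √(1 - 4αm)`, whence both factors are positive.
-/

open Complex Real

lemma re_cpow_one_half_nonneg (w : ℂ) : 0 ≤ (w ^ (1 / 2 : ℂ)).re := by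
  rcases eq_or_ne w 0 with rfl | hw
  · simp
  · rw [cpow_def_of_ne_zero hw, exp_re]
    refine mul_nonneg (Real.exp_nonneg _) (Real.cos_nonneg_of_mem_Icc ⟨?_, ?_⟩) <;>
    · simp only [mul_im, log_re, log_im, one_div, inv_re, inv_im]
      norm_num
      linarith [neg_pi_lt_arg w, arg_le_pi w]

lemma cpow_one_half_sq (w : ℂ) : (w ^ (1 / 2 : ℂ)) ^ 2 = w := by
  simpa only [Nat.cast_ofNat, one_div] using cpow_nat_inv_pow w two_ne_zero

lemma lt_re_cpow_one_half_of_mul_sub_re_lt_im_sq {a : ℝ} {w : ℂ}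
    (h : 4 * a ^ 2 * (a ^ 2 - w.re) < w.im ^ 2) : a < (w ^ (1 / 2 : ℂ)).re := by
  set r := w ^ (1 / 2 : ℂ)
  have hr : 0 ≤ r.re := re_cpow_one_half_nonneg w
  have hw : w = r ^ 2 := (cpow_one_half_sq w).symm
  have hwre : w.re = r.re ^ 2 - r.im ^ 2 := by rw [hw]; simp only [sq, mul_re]
  have hwim : w.im = 2 * r.re * r.im := by rw [hw]; simp only [sq, mul_im]; ring
  by_contra! hle
  have hsq : r.re ^ 2 ≤ a ^ 2 := pow_le_pow_left₀ hr hle 2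
  rw [hwre, hwim] at h
  nlinarith [mul_le_mul_of_nonneg_right hsq (sq_nonneg r.im), sq_nonneg a]

lemma re_lt_re_cpow_one_half_sq_add {γ δ : ℂ}
    (h : 0 < 4 * γ.re ^ 2 * δ.re + 4 * γ.re * γ.im * δ.im + δ.im ^ 2) :
    γ.re < ((γ ^ 2 + δ) ^ (1 / 2 : ℂ)).re := by
  refine lt_re_cpow_one_half_of_mul_sub_re_lt_im_sq ?_
  simp only [add_re, add_im, sq, mul_re, mul_im]
  linear_combination h

lemma pos_of_sqrt_one_sub_lt {α m x : ℝ} (hα : 0 < α)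
    (hx : (-1 + √(1 - 4 * α * m)) / (2 * α) < x) :
    0 < 1 + 2 * α * x ∧ 0 < m + x + α * x ^ 2 := by
  rw [div_lt_iff₀ (by positivity)] at hx
  have hs : 0 < 1 + 2 * α * x := by linarith [Real.sqrt_nonneg (1 - 4 * α * m)]
  have hdisc : 1 - 4 * α * m < (1 + 2 * α * x) ^ 2 := (Real.sqrt_lt' hs).1 (by linarith)
  refine ⟨hs, pos_of_mul_pos_right (a := 4 * α) ?_ (by positivity)⟩
  linear_combination hdisc

theorem re_sqrt_gt_re_gamma_general
    (α c m : ℝ) (hα : 0 < α) (hc : 0 < c)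
    (μα : ℝ)
    (hμα : μα = if 4 * α * m ≤ 1 then (-1 + Real.sqrt (1 - 4 * α * m)) / (2 * α)
                else -1 / (2 * α))
    (z : ℂ) (hz : μα < z.re)
    (γ δ : ℂ)
    (hγ : γ = (c / 2 : ℂ) * (1 + 2 * (α : ℂ) * z))
    (hδ : δ = (m : ℂ) + z * (1 + (α : ℂ) * z)) :
    γ.re < ((γ ^ 2 + δ) ^ (1/2 : ℂ)).re ∧ 0 < γ.re := by
  -- `Real.sqrt` vanishes on negatives, so both branches of `μ_α` are the same expression.
  have hμ : μα = (-1 + √(1 - 4 * α * m)) / (2 * α) := by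
    split_ifs at hμα with h
    · exact hμα
    · rw [hμα, Real.sqrt_eq_zero_of_nonpos (by linarith), add_zero]
  obtain ⟨hs, hq⟩ := pos_of_sqrt_one_sub_lt hα (hμ ▸ hz)
  have hγre : γ.re = c / 2 * (1 + 2 * α * z.re) := by simp [hγ]
  have hγim : γ.im = c * α * z.im := by simp [hγ]; ring
  have hδre : δ.re = m + z.re + α * (z.re ^ 2 - z.im ^ 2) := by simp [hδ]; ring
  have hδim : δ.im = z.im * (1 + 2 * α * z.re) := by simp [hδ]; ring
  refine ⟨re_lt_re_cpow_one_half_sq_add ?_, by rw [hγre]; positivity⟩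
  calc 0 < (1 + 2 * α * z.re) ^ 2 *
        (c ^ 2 * (m + z.re + α * z.re ^ 2) + (c ^ 2 * α + 1) * z.im ^ 2) := by
        have : 0 < c ^ 2 * (m + z.re + α * z.re ^ 2) := by positivity
        positivity
    _ = _ := by rw [hγre, hγim, hδre, hδim]; ring

/-- Lemma on the essential spectrum: if `Re z > μ_α` then
`Re √(γ²+δ) > Re γ > 0`, where `√` is the principal complex square root,
`γ = (c/2)(1+2αz)` and `δ = m + z(1+αz)`. -/
theorem re_sqrt_gt_re_gamma
    (α c m : ℝ) (hα : 0 < α) (hc : 0 < c) (hm : 0 < m)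
    (μα : ℝ)
    (hμα : μα = if 4 * α * m ≤ 1 then (-1 + Real.sqrt (1 - 4 * α * m)) / (2 * α)
                else -1 / (2 * α))
    (z : ℂ) (hz : μα < z.re)
    (γ δ : ℂ)
    (hγ : γ = (c / 2 : ℂ) * (1 + 2 * (α : ℂ) * z))
    (hδ : δ = (m : ℂ) + z * (1 + (α : ℂ) * z)) :
    γ.re < ((γ ^ 2 + δ) ^ (1/2 : ℂ)).re ∧ 0 < γ.re :=
  re_sqrt_gt_re_gamma_general α c m hα hc μα hμα z hz γ δ hγ hδ
end

section
/- Let g : ℝ → ℝ be continuous, let α > 0, c > 0, λ ∈ ℝ, and set γ = (c/2)(1 + 2αλ). If u : ℝ → ℝ is twice continuously differentiable and satisfies u''(y) + c(1+2αλ) u'(y) − g(y) u(y) = λ(1+αλ) u(y) for all y ∈ ℝ, then the function U(y) = e^{γ y} u(y) satisfies U''(y) − (g(y) + c²/4) U(y) = λ(1+αλ)(1+αc²) U(y) for all y ∈ ℝ. -/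
/-!
Conjugating `d/dx` by the weight `e^{γx}` turns it into `d/dx + γ`, so
`U'' = e^{γy} (u'' + 2γ u' + γ² u)`. With `2γ = c(1+2αλ)` the first-order part is that of
the equation for `u`, and `γ² = c²/4 + αc²λ(1+αλ)` turns the zeroth-order remainder into
the stated eigenvalue.
-/

open Real

theorem hasDerivAt_exp_mul_mul {f : ℝ → ℝ} {f' : ℝ} (γ x : ℝ) (hf : HasDerivAt f f' x) :
    HasDerivAt (fun x => exp (γ * x) * f x) (exp (γ * x) * (f' + γ * f x)) x := by
  have hexp : HasDerivAt (fun x => exp (γ * x)) (exp (γ * x) * γ) x := by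
    simpa using ((hasDerivAt_id x).const_mul γ).exp
  exact (hexp.mul hf).congr_deriv (by ring)

theorem deriv_exp_mul_mul {f : ℝ → ℝ} (γ : ℝ) (hf : Differentiable ℝ f) :
    deriv (fun x => exp (γ * x) * f x) = fun x => exp (γ * x) * (deriv f x + γ * f x) :=
  funext fun x => (hasDerivAt_exp_mul_mul γ x (hf x).hasDerivAt).deriv

theorem deriv_deriv_exp_mul_mul {u : ℝ → ℝ} (γ : ℝ) (hu : Differentiable ℝ u)
    (hu' : Differentiable ℝ (deriv u)) (y : ℝ) :
    deriv (deriv (fun x => exp (γ * x) * u x)) y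
      = exp (γ * y) * (deriv (deriv u) y + 2 * γ * deriv u y + γ ^ 2 * u y) := by
  rw [deriv_exp_mul_mul γ hu]
  have hderiv : HasDerivAt (fun x => deriv u x + γ * u x)
      (deriv (deriv u) y + γ * deriv u y) y :=
    (hu' y).hasDerivAt.add ((hu y).hasDerivAt.const_mul γ)
  rw [(hasDerivAt_exp_mul_mul γ y hderiv).deriv]
  ring

theorem selfadjoint_transformation_general
    (g : ℝ → ℝ)
    (α c lam : ℝ)
    (γ : ℝ) (hγ : γ = c / 2 * (1 + 2 * α * lam))
    (u : ℝ → ℝ) (hu : ContDiff ℝ 2 u)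
    (heq : ∀ y, deriv (deriv u) y + c * (1 + 2 * α * lam) * deriv u y - g y * u y
      = lam * (1 + α * lam) * u y) :
    ∀ y, deriv (deriv (fun x => Real.exp (γ * x) * u x)) y
        - (g y + c ^ 2 / 4) * (Real.exp (γ * y) * u y)
      = lam * (1 + α * lam) * (1 + α * c ^ 2) * (Real.exp (γ * y) * u y) := by
  have hu' : Differentiable ℝ (deriv u) :=
    (hu.iterate_deriv' 1 1).differentiable one_ne_zero
  intro y
  rw [deriv_deriv_exp_mul_mul γ (hu.differentiable two_ne_zero) hu' y]
  have hγ_sq : γ ^ 2 = c ^ 2 / 4 + α * c ^ 2 * lam * (1 + α * lam) := by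
    rw [hγ]; ring
  linear_combination exp (γ * y) * heq y + exp (γ * y) * u y * hγ_sq
    + exp (γ * y) * deriv u y * (2 * hγ)

/-- The substitution `U(y) = e^{γy} u(y)`, `γ = (c/2)(1+2αλ)`, transforms the
quadratic eigenvalue equation `u'' + c(1+2αλ)u' − g u = λ(1+αλ)u` into the
self-adjoint form `U'' − (g + c²/4)U = λ(1+αλ)(1+αc²)U`. -/
theorem selfadjoint_transformation
    (g : ℝ → ℝ) (hg : Continuous g)
    (α c lam : ℝ) (hα : 0 < α) (hc : 0 < c)
    (γ : ℝ) (hγ : γ = c / 2 * (1 + 2 * α * lam))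
    (u : ℝ → ℝ) (hu : ContDiff ℝ 2 u)
    (heq : ∀ y, deriv (deriv u) y + c * (1 + 2 * α * lam) * deriv u y - g y * u y
      = lam * (1 + α * lam) * u y) :
    ∀ y, deriv (deriv (fun x => Real.exp (γ * x) * u x)) y
        - (g y + c ^ 2 / 4) * (Real.exp (γ * y) * u y)
      = lam * (1 + α * lam) * (1 + α * c ^ 2) * (Real.exp (γ * y) * u y) :=
  selfadjoint_transformation_general g α c lam γ hγ u hu heq
end

section
/- Let α > 0 and s ∈ ℝ, set γ = αs² − 1, and define V' : ℝ → ℝ by V'(u) = −u(1−u)(s + γ(1−2u)). Let h(x) = (1 + eˣ)⁻¹. Then u(x,t) = h(x − st) satisfies α ∂ₜₜu + ∂ₜu = ∂ₓₓu − V'(u) for all (x,t) ∈ ℝ². Moreover, if s > 1/√α (so γ > 0), then the derivative of V' at u = 0 equals −(s+γ) < 0 whenever s + γ > 0, i.e., V''(0) < 0. -/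
/-!
Since `(1 + eˣ)⁻¹ = σ(-x)` for the logistic sigmoid `σ`, the front is `u(x,t) = σ(st - x)`, and for
any profile `f` the wave `f(st - x)` turns `α ∂ₜₜu + ∂ₜu - ∂ₓₓu` into `(αs² - 1) f'' + s f'`.
With `σ' = σ(1 - σ)` and `σ'' = σ(1 - σ)(1 - 2σ)` this is `-V'(σ)`, which is how `V'` was chosen.
As `V'(u)` carries the factor `u`, `V''(0)` is minus the remaining factor at `0`, namely `-(s + γ)`.
-/

open Real

theorem deriv_comp_mul_sub (f : ℝ → ℝ) (s c t : ℝ) :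
    deriv (fun τ => f (s * τ - c)) t = s * deriv f (s * t - c) := by
  simpa only [smul_eq_mul, deriv_comp_sub_const] using
    deriv_comp_mul_left (f := fun y => f (y - c)) s t (𝕜 := ℝ)

theorem deriv_deriv_comp_mul_sub (f : ℝ → ℝ) (s c t : ℝ) :
    deriv (deriv fun τ => f (s * τ - c)) t = s ^ 2 * deriv (deriv f) (s * t - c) := by
  simp only [funext (deriv_comp_mul_sub f s c), deriv_const_mul_field, deriv_comp_mul_sub]
  ring

theorem deriv_deriv_comp_const_sub (f : ℝ → ℝ) (a x : ℝ) :
    deriv (deriv fun ξ => f (a - ξ)) x = deriv (deriv f) (a - x) := by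
  simp only [funext fun ξ => deriv_comp_const_sub (f := f) (a := a) (x := ξ), deriv.fun_neg,
    deriv_comp_const_sub, neg_neg]

theorem dampedWave_travellingWave (f : ℝ → ℝ) (α s x t : ℝ) :
    α * deriv (deriv fun τ => f (s * τ - x)) t + deriv (fun τ => f (s * τ - x)) t
        - deriv (deriv fun ξ => f (s * t - ξ)) x
      = (α * s ^ 2 - 1) * deriv (deriv f) (s * t - x) + s * deriv f (s * t - x) := by
  rw [deriv_deriv_comp_mul_sub, deriv_comp_mul_sub, deriv_deriv_comp_const_sub]
  ring

theorem deriv_deriv_sigmoid :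
    deriv (deriv sigmoid) = fun x => sigmoid x * (1 - sigmoid x) * (1 - 2 * sigmoid x) := by
  funext x
  rw [deriv_sigmoid]
  refine ((hasDerivAt_sigmoid x).mul ((hasDerivAt_sigmoid x).const_sub 1)).deriv.trans ?_
  ring

theorem hasDerivAt_id_mul_zero {g : ℝ → ℝ} (hg : DifferentiableAt ℝ g 0) :
    HasDerivAt (fun u => u * g u) (g 0) 0 := by
  simpa using (hasDerivAt_id' 0).fun_mul hg.hasDerivAt

theorem supersonic_front_example_general
    (α s : ℝ)
    (γ : ℝ) (hγ : γ = α * s ^ 2 - 1)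
    (Vp : ℝ → ℝ) (hVp : ∀ u, Vp u = -(u * (1 - u) * (s + γ * (1 - 2 * u))))
    (h : ℝ → ℝ) (hh : ∀ x, h x = (1 + Real.exp x)⁻¹)
    (u : ℝ → ℝ → ℝ) (hu : ∀ x t, u x t = h (x - s * t)) :
    (∀ x t,
      α * deriv (deriv (fun τ => u x τ)) t + deriv (fun τ => u x τ) t
        = deriv (deriv (fun ξ => u ξ t)) x - Vp (u x t)) ∧
    deriv Vp 0 = -(s + γ) ∧
    (1 / Real.sqrt α < s → 0 < s + γ → deriv Vp 0 < 0) := by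
  have hu_sigmoid : u = fun x t => sigmoid (s * t - x) := by
    funext x t
    rw [hu, hh, sigmoid_def, neg_sub]
  have hVp_deriv : deriv Vp 0 = -(s + γ) := by
    rw [show Vp = fun u => -(u * ((1 - u) * (s + γ * (1 - 2 * u)))) from
      funext fun v => by rw [hVp, mul_assoc]]
    refine (hasDerivAt_id_mul_zero (by fun_prop)).neg.deriv.trans ?_
    ring
  refine ⟨fun x t => ?_, hVp_deriv, fun _ hpos => by linarith⟩
  have hwave := dampedWave_travellingWave sigmoid α s x t
  rw [deriv_deriv_sigmoid, deriv_sigmoid, ← hγ] at hwave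
  subst hu_sigmoid
  rw [hVp]
  linear_combination hwave

/-- Explicit supersonic front example: with `γ = αs²−1`,
`V'(u) = −u(1−u)(s+γ(1−2u))` and `h(x) = (1+eˣ)⁻¹`, the function
`u(x,t) = h(x−st)` solves the damped wave equation; moreover
`(V')'(0) = −(s+γ)`, which is negative when `s > 1/√α`. -/
theorem supersonic_front_example
    (α s : ℝ) (hα : 0 < α)
    (γ : ℝ) (hγ : γ = α * s ^ 2 - 1)
    (Vp : ℝ → ℝ) (hVp : ∀ u, Vp u = -(u * (1 - u) * (s + γ * (1 - 2 * u))))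
    (h : ℝ → ℝ) (hh : ∀ x, h x = (1 + Real.exp x)⁻¹)
    (u : ℝ → ℝ → ℝ) (hu : ∀ x t, u x t = h (x - s * t)) :
    (∀ x t,
      α * deriv (deriv (fun τ => u x τ)) t + deriv (fun τ => u x τ) t
        = deriv (deriv (fun ξ => u ξ t)) x - Vp (u x t)) ∧
    deriv Vp 0 = -(s + γ) ∧
    (1 / Real.sqrt α < s → 0 < s + γ → deriv Vp 0 < 0) :=
  supersonic_front_example_general α s γ hγ Vp hVp h hh u hu
end

section
/- Let c > 0, ε₀ > 0, ȳ ∈ ℝ, and let V : ℝ → ℝ be continuous and bounded below with V(u) ≥ 0 whenever |u| ≤ ε₀. Let v ∈ H¹_loc(ℝ) with e^{cy/2}v ∈ L²(ℝ), e^{cy/2}v' ∈ L²(ℝ), and suppose |v(y)| ≤ ε₀ for all y ≥ ȳ and |v(ȳ)| = ε₀. Then for every y₀ ∈ ℝ, ∫_ℝ e^{c(y−y₀)} ( (1/2)|v'(y)|² + V(v(y)) ) dy ≥ e^{c(ȳ−y₀)} ( (min V)/c + c ε₀²/2 ). -/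
open MeasureTheory Real
open Set Filter

/-!
Split the energy at `ȳ`. On `(-∞, ȳ]` the potential term is at least `min V`, and
`∫_{-∞}^{ȳ} e^{cy} dy = e^{cȳ}/c`; on `(ȳ, ∞)` it is nonnegative since `|v| ≤ ε₀` there.
The kinetic term is controlled by the weighted trace inequality
`c e^{cȳ} v(ȳ)² ≤ ∫_{ȳ}^∞ e^{cy} v'²`, which follows from integrating
`(e^{cy} v²)' = e^{cy} (c v² + 2 v v') ≥ -e^{cy} v'² / c` over `(ȳ, ∞)`,
using that `e^{cy} v²` is integrable with integrable derivative and so vanishes at `+∞`.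
-/

lemma neg_sq_div_le_mul_sq_add {c : ℝ} (hc : 0 < c) (a b : ℝ) :
    -(b ^ 2 / c) ≤ c * a ^ 2 + 2 * a * b := by
  rw [neg_le_iff_add_nonneg, ← sub_nonneg]
  have : c * a ^ 2 + 2 * a * b + b ^ 2 / c = (c * a + b) ^ 2 / c := by field_simp; ring
  rw [sub_zero, this]
  positivity

section WeightedTrace

variable {c : ℝ} {v v' : ℝ → ℝ}

lemma hasDerivAt_exp_mul_mul_sq (hderiv : ∀ y, HasDerivAt v (v' y) y) (y : ℝ) :
    HasDerivAt (fun y => exp (c * y) * v y ^ 2)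
      (exp (c * y) * (c * v y ^ 2 + 2 * v y * v' y)) y := by
  have hexp : HasDerivAt (fun y => exp (c * y)) (exp (c * y) * c) y :=
    ((hasDerivAt_id y).const_mul c).exp.congr_deriv (by simp)
  exact (hexp.mul ((hderiv y).fun_pow 2)).congr_deriv (by push_cast; ring)

lemma integrable_exp_mul_two_mul_mul (hderiv : ∀ y, HasDerivAt v (v' y) y)
    (hv : Integrable (fun y => exp (c * y) * v y ^ 2))
    (hv' : Integrable (fun y => exp (c * y) * v' y ^ 2)) :
    Integrable (fun y => exp (c * y) * (2 * v y * v' y)) := by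
  have hv_cont : Continuous v := continuous_iff_continuousAt.2 fun y => (hderiv y).continuousAt
  have hv'_meas : Measurable v' := by
    rw [show v' = deriv v from funext fun y => (hderiv y).deriv.symm]
    exact measurable_deriv v
  refine (hv.add hv').mono' ?_ (ae_of_all _ fun y => ?_)
  · have : Measurable fun y => exp (c * y) * (2 * v y) := by fun_prop
    exact (this.mul hv'_meas).aestronglyMeasurable.congr
      (ae_of_all _ fun y => by simp only [Pi.mul_apply, mul_assoc])
  · rw [norm_mul, norm_of_nonneg (exp_pos _).le, Pi.add_apply, ← mul_add]
    gcongr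
    rw [norm_eq_abs, abs_le]
    constructor <;> nlinarith [sq_nonneg (v y + v' y), sq_nonneg (v y - v' y)]

theorem mul_exp_mul_sq_le_setIntegral_Ioi (hc : 0 < c) (hderiv : ∀ y, HasDerivAt v (v' y) y)
    (hv : Integrable (fun y => exp (c * y) * v y ^ 2))
    (hv' : Integrable (fun y => exp (c * y) * v' y ^ 2)) (a : ℝ) :
    c * exp (c * a) * v a ^ 2 ≤ ∫ y in Ioi a, exp (c * y) * v' y ^ 2 := by
  have hG_int : Integrable (fun y => exp (c * y) * (c * v y ^ 2 + 2 * v y * v' y)) := by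
    refine ((hv.const_mul c).add (integrable_exp_mul_two_mul_mul hderiv hv hv')).congr
      (ae_of_all _ fun y => ?_)
    simp only [Pi.add_apply]
    ring
  have h_tendsto : Tendsto (fun y => exp (c * y) * v y ^ 2) atTop (nhds 0) :=
    tendsto_zero_of_hasDerivAt_of_integrableOn_Ioi (a := a)
      (fun y _ => hasDerivAt_exp_mul_mul_sq hderiv y) hG_int.integrableOn hv.integrableOn
  have h_ftc : ∫ y in Ioi a, exp (c * y) * (c * v y ^ 2 + 2 * v y * v' y)
      = 0 - exp (c * a) * v a ^ 2 :=
    integral_Ioi_of_hasDerivAt_of_tendsto' (fun y _ => hasDerivAt_exp_mul_mul_sq hderiv y)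
      hG_int.integrableOn h_tendsto
  have h_mono : ∫ y in Ioi a, -(exp (c * y) * v' y ^ 2 / c)
      ≤ ∫ y in Ioi a, exp (c * y) * (c * v y ^ 2 + 2 * v y * v' y) := by
    refine setIntegral_mono_on (hv'.div_const c).neg.integrableOn hG_int.integrableOn
      measurableSet_Ioi fun y _ => ?_
    have := mul_le_mul_of_nonneg_left (neg_sq_div_le_mul_sq_add hc (v y) (v' y))
      (exp_pos (c * y)).le
    rwa [mul_neg, ← mul_div_assoc] at this
  rw [integral_neg, integral_div, h_ftc, zero_sub, neg_le_neg_iff, le_div_iff₀ hc] at h_mono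
  linarith

end WeightedTrace

lemma mul_exp_mul_div_le_integral {c a m : ℝ} {f : ℝ → ℝ} (hc : 0 < c)
    (hf : Integrable (fun y => exp (c * y) * f y))
    (hm : ∀ y ≤ a, m ≤ f y) (hf_nonneg : ∀ y > a, 0 ≤ f y) :
    exp (c * a) * m / c ≤ ∫ y, exp (c * y) * f y := by
  rw [← intervalIntegral.integral_Iic_add_Ioi hf.integrableOn hf.integrableOn]
  have h_Iic : exp (c * a) * m / c ≤ ∫ y in Iic a, exp (c * y) * f y := by
    calc exp (c * a) * m / c = ∫ y in Iic a, exp (c * y) * m := by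
          rw [integral_mul_const, integral_exp_mul_Iic hc]; ring
      _ ≤ ∫ y in Iic a, exp (c * y) * f y :=
          setIntegral_mono_on ((integrableOn_exp_mul_Iic hc a).mul_const m) hf.integrableOn
            measurableSet_Iic fun y hy => by gcongr; exact hm y hy
  have h_Ioi : 0 ≤ ∫ y in Ioi a, exp (c * y) * f y :=
    setIntegral_nonneg measurableSet_Ioi fun y hy => mul_nonneg (exp_pos _).le (hf_nonneg y hy)
  exact le_add_of_le_of_nonneg h_Iic h_Ioi

theorem energy_lower_bound_at_invasion_point_general
    (c ε₀ ybar : ℝ) (hc : 0 < c)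
    (V : ℝ → ℝ) (hVbdd : BddBelow (Set.range V))
    (hVpos : ∀ u : ℝ, |u| ≤ ε₀ → 0 ≤ V u)
    (v v' : ℝ → ℝ)
    (hderiv : ∀ y, HasDerivAt v (v' y) y)
    (hv : Integrable (fun y => Real.exp (c * y) * (v y) ^ 2))
    (hv' : Integrable (fun y => Real.exp (c * y) * (v' y) ^ 2))
    (hVint : Integrable (fun y => Real.exp (c * y) * V (v y)))
    (hsmall : ∀ y ≥ ybar, |v y| ≤ ε₀)
    (hbar : |v ybar| = ε₀) :
    ∀ y₀ : ℝ,
      Real.exp (c * (ybar - y₀)) * (sInf (Set.range V) / c + c * ε₀ ^ 2 / 2)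
        ≤ ∫ y, Real.exp (c * (y - y₀)) * ((1/2) * (v' y) ^ 2 + V (v y)) := by
  intro y₀
  have h_kinetic : c * exp (c * ybar) * ε₀ ^ 2 ≤ ∫ y, exp (c * y) * v' y ^ 2 := by
    rw [← hbar, sq_abs]
    exact (mul_exp_mul_sq_le_setIntegral_Ioi hc hderiv hv hv' ybar).trans
      (setIntegral_le_integral hv' (ae_of_all _ fun y => by positivity))
  have h_potential : exp (c * ybar) * sInf (range V) / c ≤ ∫ y, exp (c * y) * V (v y) :=
    mul_exp_mul_div_le_integral hc hVint (fun y _ => csInf_le hVbdd ⟨v y, rfl⟩)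
      fun y hy => hVpos _ (hsmall y hy.le)
  have h_shift : ∫ y, exp (c * (y - y₀)) * ((1/2) * v' y ^ 2 + V (v y))
      = exp (-(c * y₀)) *
          ((1/2) * (∫ y, exp (c * y) * v' y ^ 2) + ∫ y, exp (c * y) * V (v y)) := by
    rw [← integral_const_mul, ← integral_add (hv'.const_mul _) hVint, ← integral_const_mul]
    congr 1 with y
    rw [mul_sub, sub_eq_add_neg, exp_add]
    ring
  rw [h_shift, mul_sub, sub_eq_add_neg, exp_add, mul_comm (exp _) (exp _), mul_assoc]
  refine mul_le_mul_of_nonneg_left ?_ (exp_pos _).le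
  rw [mul_add, mul_div_assoc']
  linarith

/-- Lower bound on the energy at the invasion point: if `V ≥ 0` on `[−ε₀,ε₀]`,
`|v| ≤ ε₀` on `[ȳ,∞)` and `|v(ȳ)| = ε₀`, then
`∫ e^{c(y−y₀)} (½ v'² + V(v)) dy ≥ e^{c(ȳ−y₀)} ((inf V)/c + c ε₀²/2)`. -/
theorem energy_lower_bound_at_invasion_point
    (c ε₀ ybar : ℝ) (hc : 0 < c) (hε₀ : 0 < ε₀)
    (V : ℝ → ℝ) (hVcont : Continuous V) (hVbdd : BddBelow (Set.range V))
    (hVpos : ∀ u : ℝ, |u| ≤ ε₀ → 0 ≤ V u)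
    (v v' : ℝ → ℝ)
    (hderiv : ∀ y, HasDerivAt v (v' y) y)
    (hv : Integrable (fun y => Real.exp (c * y) * (v y) ^ 2))
    (hv' : Integrable (fun y => Real.exp (c * y) * (v' y) ^ 2))
    (hVint : Integrable (fun y => Real.exp (c * y) * V (v y)))
    (hsmall : ∀ y ≥ ybar, |v y| ≤ ε₀)
    (hbar : |v ybar| = ε₀) :
    ∀ y₀ : ℝ,
      Real.exp (c * (ybar - y₀)) * (sInf (Set.range V) / c + c * ε₀ ^ 2 / 2)
        ≤ ∫ y, Real.exp (c * (y - y₀)) * ((1/2) * (v' y) ^ 2 + V (v y)) :=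
  energy_lower_bound_at_invasion_point_general c ε₀ ybar hc V hVbdd hVpos v v' hderiv hv hv' hVint
    hsmall hbar
end
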